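/- arXiv:1205.0417 — 4 statements merged into one kernel-verified Lean document; each statement's English description precedes it below -/
import Mathlib

section
/- (Fréchet–Hoeffding bounds) Let Γ be a bivariate Pareto–Lévy copula. Then for every (u₁,u₂) in its domain, Γ⊥(u₁,u₂) ≤ Γ(u₁,u₂) ≤ Γ‖(u₁,u₂), where Γ‖(u₁,u₂) = 1/max(u₁,u₂) and Γ⊥(u₁,u₂) = (1/u₁)·1{u₂ = 0} + (1/u₂)·1{u₁ = 0}, with the convention 1/∞ = 0. -/
/-! The upper bound: the 2-increasing property on the rectangle `[u₁,∞] × [0,u₂]` gives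
`Γ(u₁,u₂) ≤ Γ(u₁,0) - Γ(∞,0) + Γ(∞,u₂) = 1/u₁`, since `Γ` is the Pareto margin on the axis and
vanishes at `∞`; symmetrically `Γ(u₁,u₂) ≤ 1/u₂`. The lower bound is the margin on the axes and
nonnegativity elsewhere. -/

open scoped ENNReal

/-- A bivariate Pareto–Lévy copula: a function on `[0,∞]² \ {(0,0)}` (realized as a total
function on `ℝ≥0∞ × ℝ≥0∞`, with the conditions only imposed away from `(0,0)`), with values
in `[0,∞)`, which is grounded, has Pareto margins, and is 2-increasing. -/
structure ParetoLevyCopula where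
  toFun : ℝ≥0∞ → ℝ≥0∞ → ℝ
  nonneg : ∀ u₁ u₂ : ℝ≥0∞, (u₁, u₂) ≠ (0, 0) → 0 ≤ toFun u₁ u₂
  grounded_left : ∀ u : ℝ≥0∞, u ≠ 0 → toFun u ⊤ = 0
  grounded_right : ∀ u : ℝ≥0∞, u ≠ 0 → toFun ⊤ u = 0
  margin_left : ∀ u : ℝ≥0∞, u ≠ 0 → toFun u 0 = (u⁻¹).toReal
  margin_right : ∀ u : ℝ≥0∞, u ≠ 0 → toFun 0 u = (u⁻¹).toReal
  two_increasing : ∀ u₁ u₂ v₁ v₂ : ℝ≥0∞, u₁ ≤ v₁ → u₂ ≤ v₂ → (u₁, u₂) ≠ (0, 0) →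
    0 ≤ toFun v₁ v₂ - toFun v₁ u₂ - toFun u₁ v₂ + toFun u₁ u₂

namespace ParetoLevyCopula

variable (C : ParetoLevyCopula)

theorem toFun_le_inv_left {u₁ : ℝ≥0∞} (h₁ : u₁ ≠ 0) (u₂ : ℝ≥0∞) :
    C.toFun u₁ u₂ ≤ (u₁⁻¹).toReal := by
  by_cases h₂ : u₂ = 0
  · rw [h₂, C.margin_left u₁ h₁]
  have rect := C.two_increasing u₁ 0 ⊤ u₂ le_top zero_le (by simp [h₁])
  rw [C.grounded_right u₂ h₂, C.margin_left u₁ h₁, C.margin_left ⊤ ENNReal.top_ne_zero] at rect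
  simp only [ENNReal.inv_top, ENNReal.toReal_zero] at rect
  linarith

theorem toFun_le_inv_right {u₂ : ℝ≥0∞} (h₂ : u₂ ≠ 0) (u₁ : ℝ≥0∞) :
    C.toFun u₁ u₂ ≤ (u₂⁻¹).toReal := by
  by_cases h₁ : u₁ = 0
  · rw [h₁, C.margin_right u₂ h₂]
  have rect := C.two_increasing 0 u₂ u₁ ⊤ zero_le le_top (by simp [h₂])
  rw [C.grounded_left u₁ h₁, C.margin_right u₂ h₂, C.margin_right ⊤ ENNReal.top_ne_zero] at rect
  simp only [ENNReal.inv_top, ENNReal.toReal_zero] at rect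
  linarith

theorem toFun_le_inv_sup {u₁ u₂ : ℝ≥0∞} (h : (u₁, u₂) ≠ (0, 0)) :
    C.toFun u₁ u₂ ≤ ((u₁ ⊔ u₂)⁻¹).toReal := by
  rcases le_total u₁ u₂ with hle | hle
  · rw [sup_eq_right.mpr hle]
    refine C.toFun_le_inv_right ?_ u₁
    rintro rfl
    exact h (by rw [nonpos_iff_eq_zero.mp hle])
  · rw [sup_eq_left.mpr hle]
    refine C.toFun_le_inv_left ?_ u₂
    rintro rfl
    exact h (by rw [nonpos_iff_eq_zero.mp hle])

theorem margin_indicator_le_toFun {u₁ u₂ : ℝ≥0∞} (h : (u₁, u₂) ≠ (0, 0)) :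
    ((if u₂ = 0 then (u₁⁻¹).toReal else 0) + (if u₁ = 0 then (u₂⁻¹).toReal else 0))
      ≤ C.toFun u₁ u₂ := by
  by_cases h₁ : u₁ = 0
  · have h₂ : u₂ ≠ 0 := fun h₂ ↦ h (by rw [h₁, h₂])
    simp [h₁, h₂, C.margin_right u₂ h₂]
  by_cases h₂ : u₂ = 0
  · simp [h₁, h₂, C.margin_left u₁ h₁]
  simpa [h₁, h₂] using C.nonneg u₁ u₂ h

end ParetoLevyCopula

/-- Fréchet–Hoeffding bounds for Pareto–Lévy copulas: `Γ⊥ ≤ Γ ≤ Γ‖` on the domain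
`[0,∞]² \ {(0,0)}`, where `Γ‖(u₁,u₂) = 1/max(u₁,u₂)` and
`Γ⊥(u₁,u₂) = (1/u₁)·1{u₂=0} + (1/u₂)·1{u₁=0}`, with the convention `1/∞ = 0`. -/
theorem paretoLevyCopula_frechet_hoeffding (C : ParetoLevyCopula) (u₁ u₂ : ℝ≥0∞)
    (h : (u₁, u₂) ≠ (0, 0)) :
    ((if u₂ = 0 then (u₁⁻¹).toReal else 0) + (if u₁ = 0 then (u₂⁻¹).toReal else 0))
      ≤ C.toFun u₁ u₂ ∧
    C.toFun u₁ u₂ ≤ ((u₁ ⊔ u₂)⁻¹).toReal :=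
  ⟨C.margin_indicator_le_toFun h, C.toFun_le_inv_sup h⟩
end

section
/- (Asymptotic covariance comparison of the empirical and oracle Pareto–Lévy copula estimators) Let Γ be a bivariate Pareto–Lévy copula whose restriction to (0,∞)² has continuous first-order partial derivatives ∂₁Γ and ∂₂Γ, and suppose that for every fixed u₂ ∈ (0,∞) the map u₁ ↦ u₁·Γ(u₁,u₂) is nondecreasing on (0,∞), and for every fixed u₁ ∈ (0,∞) the map u₂ ↦ u₂·Γ(u₁,u₂) is nondecreasing on (0,∞). Then for all u = (u₁,u₂) and v = (v₁,v₂) in (0,∞)², K(u,v) ≤ Γ(u₁∨v₁, u₂∨v₂); in particular K(u,u) ≤ Γ(u). -/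
open scoped ENNReal

/-- The restriction of a Pareto–Lévy copula to `(0,∞)²`, viewed as a real function. -/
noncomputable def plcReal (C : ParetoLevyCopula) (x y : ℝ) : ℝ :=
  C.toFun (ENNReal.ofReal x) (ENNReal.ofReal y)

/-- The asymptotic covariance kernel of the empirical Pareto–Lévy copula process,
built from a function `g` on `(0,∞)²` together with its partial derivatives `D₁, D₂`:
`K(u,v) = g(u₁∨v₁,u₂∨v₂) + u₁²∂₁g(u)g(u₁∨v₁,v₂) + u₂²∂₂g(u)g(v₁,u₂∨v₂)`
`+ v₁²∂₁g(v)g(u₁∨v₁,u₂) + v₂²∂₂g(v)g(u₁,u₂∨v₂) + u₁²v₁²∂₁g(u)∂₁g(v)/(u₁∨v₁)`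
`+ u₁²v₂²∂₁g(u)∂₂g(v)g(u₁,v₂) + u₂²v₁²∂₂g(u)∂₁g(v)g(v₁,u₂) + u₂²v₂²∂₂g(u)∂₂g(v)/(u₂∨v₂)`. -/
noncomputable def plcKernel (g D₁ D₂ : ℝ → ℝ → ℝ) (u v : ℝ × ℝ) : ℝ :=
  g (max u.1 v.1) (max u.2 v.2)
    + u.1 ^ 2 * D₁ u.1 u.2 * g (max u.1 v.1) v.2
    + u.2 ^ 2 * D₂ u.1 u.2 * g v.1 (max u.2 v.2)
    + v.1 ^ 2 * D₁ v.1 v.2 * g (max u.1 v.1) u.2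
    + v.2 ^ 2 * D₂ v.1 v.2 * g u.1 (max u.2 v.2)
    + u.1 ^ 2 * v.1 ^ 2 * D₁ u.1 u.2 * D₁ v.1 v.2 / max u.1 v.1
    + u.1 ^ 2 * v.2 ^ 2 * D₁ u.1 u.2 * D₂ v.1 v.2 * g u.1 v.2
    + u.2 ^ 2 * v.1 ^ 2 * D₂ u.1 u.2 * D₁ v.1 v.2 * g v.1 u.2
    + u.2 ^ 2 * v.2 ^ 2 * D₂ u.1 u.2 * D₂ v.1 v.2 / max u.2 v.2

/-!
By the symmetry of `K` we may assume `u₁ ≤ v₁`. Put `m = u₂ ∨ v₂` and scale the partial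
derivatives as `a = u₁²∂₁Γ(u)`, `b = u₂²∂₂Γ(u)`, `c = v₁²∂₁Γ(v)`, `d = v₂²∂₂Γ(v)`. Then
`K(u,v) - Γ(v₁,m) = a(Γ(v) + c/v₁) + b(Γ(v₁,m) + d/m) + c(1+b)Γ(v₁,u₂) + d(Γ(u₁,m) + aΓ(u₁,v₂))`,
and every summand is `≤ 0`: groundedness and 2-increasingness make `Γ` antitone in each
argument, so `a, b, c, d ≤ 0`; monotonicity of `x ↦ xΓ(x,y)` gives `-x²∂₁Γ(x,y) ≤ xΓ(x,y)`;
and the Pareto margins give `xΓ(x,y) ≤ 1`.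
-/

open Set Filter Topology

lemma IsOpen.accPt_principal {X : Type*} [TopologicalSpace X] [∀ x : X, (𝓝[≠] x).NeBot]
    {s : Set X} {x : X} (hs : IsOpen s) (hx : x ∈ s) : AccPt x (𝓟 s) :=
  accPt_iff_frequently_nhdsNE.2
    (eventually_nhdsWithin_of_eventually_nhds (hs.mem_nhds hx)).frequently

lemma HasDerivAt.neg_sq_mul_le_of_monotoneOn_mul {f : ℝ → ℝ} {f' x : ℝ}
    (hd : HasDerivAt f f' x) (hx : 0 < x) (hm : MonotoneOn (fun t => t * f t) (Ioi 0)) :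
    -(x ^ 2 * f') ≤ x * f x := by
  have hprod : HasDerivAt (fun t => t * f t) (1 * f x + x * f') x := (hasDerivAt_id' x).mul hd
  have h := hprod.hasDerivWithinAt.nonneg_of_monotoneOn (isOpen_Ioi.accPt_principal hx) hm
  nlinarith [mul_nonneg hx.le h]

lemma add_div_nonneg_of_neg_le_mul {g c x : ℝ} (hx : 0 < x) (h : -c ≤ x * g) : 0 ≤ g + c / x := by
  have : -(c / x) ≤ g := by rw [← neg_div, div_le_iff₀ hx]; linarith
  linarith

lemma plcKernel_comm (g D₁ D₂ : ℝ → ℝ → ℝ) (u v : ℝ × ℝ) :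
    plcKernel g D₁ D₂ u v = plcKernel g D₁ D₂ v u := by
  simp only [plcKernel, max_comm v.1, max_comm v.2]
  ring

namespace ParetoLevyCopula

variable (C : ParetoLevyCopula) {x y : ℝ}

lemma plcReal_nonneg (hx : 0 < x) : 0 ≤ plcReal C x y :=
  C.nonneg _ _ (by simp [hx])

lemma antitoneOn_plcReal_left : AntitoneOn (fun x => plcReal C x y) (Ioi 0) := by
  intro s hs t ht hst
  have h := C.two_increasing (.ofReal s) (.ofReal y) (.ofReal t) ⊤
    (ENNReal.ofReal_le_ofReal hst) le_top (by simp [mem_Ioi.1 hs])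
  rw [C.grounded_left _ (by simpa using ht), C.grounded_left _ (by simpa using hs)] at h
  unfold plcReal
  linarith

lemma antitoneOn_plcReal_right : AntitoneOn (fun y => plcReal C x y) (Ioi 0) := by
  intro s hs t ht hst
  have h := C.two_increasing (.ofReal x) (.ofReal s) ⊤ (.ofReal t)
    le_top (ENNReal.ofReal_le_ofReal hst) (by simp [mem_Ioi.1 hs])
  rw [C.grounded_right _ (by simpa using ht), C.grounded_right _ (by simpa using hs)] at h
  unfold plcReal
  linarith

lemma mul_plcReal_le_one_left (hx : 0 < x) (hy : 0 < y) : x * plcReal C x y ≤ 1 := by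
  have h := C.two_increasing (.ofReal x) 0 ⊤ (.ofReal y) le_top zero_le (by simp [hx])
  rw [C.grounded_right _ (by simpa), C.margin_left ⊤ ENNReal.top_ne_zero,
    C.margin_left _ (by simpa)] at h
  simp only [ENNReal.inv_top, ENNReal.toReal_zero, ENNReal.toReal_inv,
    ENNReal.toReal_ofReal hx.le] at h
  rw [← mul_inv_cancel₀ hx.ne']
  exact mul_le_mul_of_nonneg_left (by unfold plcReal; linarith) hx.le

lemma mul_plcReal_le_one_right (hx : 0 < x) (hy : 0 < y) : y * plcReal C x y ≤ 1 := by
  have h := C.two_increasing 0 (.ofReal y) (.ofReal x) ⊤ zero_le le_top (by simp [hy])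
  rw [C.grounded_left _ (by simpa), C.margin_right ⊤ ENNReal.top_ne_zero,
    C.margin_right _ (by simpa)] at h
  simp only [ENNReal.inv_top, ENNReal.toReal_zero, ENNReal.toReal_inv,
    ENNReal.toReal_ofReal hy.le] at h
  rw [← mul_inv_cancel₀ hy.ne']
  exact mul_le_mul_of_nonneg_left (by unfold plcReal; linarith) hy.le

lemma mul_plcReal_mul_plcReal_le {z : ℝ} (hx : 0 < x) (hy : 0 < y) (hz : 0 < z) :
    x * plcReal C x y * plcReal C x z ≤ plcReal C x (max y z) := by
  rcases max_choice y z with h | h <;> rw [h]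
  · nlinarith [mul_le_mul_of_nonneg_left (C.mul_plcReal_le_one_left hx hz)
      (C.plcReal_nonneg hx (y := y))]
  · nlinarith [mul_le_mul_of_nonneg_left (C.mul_plcReal_le_one_left hx hy)
      (C.plcReal_nonneg hx (y := z))]

theorem plcKernel_le_of_fst_le {D₁ D₂ : ℝ → ℝ → ℝ}
    (hD₁ : ∀ x y : ℝ, 0 < x → 0 < y → HasDerivAt (fun t : ℝ => plcReal C t y) (D₁ x y) x)
    (hD₂ : ∀ x y : ℝ, 0 < x → 0 < y → HasDerivAt (fun t : ℝ => plcReal C x t) (D₂ x y) y)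
    (hmon₁ : ∀ y : ℝ, 0 < y → MonotoneOn (fun x : ℝ => x * plcReal C x y) (Ioi 0))
    (hmon₂ : ∀ x : ℝ, 0 < x → MonotoneOn (fun y : ℝ => y * plcReal C x y) (Ioi 0))
    {u₁ u₂ v₁ v₂ : ℝ} (hu₁ : 0 < u₁) (hu₂ : 0 < u₂) (hv₁ : 0 < v₁) (hv₂ : 0 < v₂)
    (h₁ : u₁ ≤ v₁) :
    plcKernel (plcReal C) D₁ D₂ (u₁, u₂) (v₁, v₂) ≤ plcReal C v₁ (max u₂ v₂) := by
  set Γ := plcReal C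
  set m := max u₂ v₂
  have hm : 0 < m := lt_max_of_lt_left hu₂
  set a := u₁ ^ 2 * D₁ u₁ u₂
  set b := u₂ ^ 2 * D₂ u₁ u₂
  set c := v₁ ^ 2 * D₁ v₁ v₂
  set d := v₂ ^ 2 * D₂ v₁ v₂
  have hK : plcKernel Γ D₁ D₂ (u₁, u₂) (v₁, v₂) - Γ v₁ m =
      a * (Γ v₁ v₂ + c / v₁) + b * (Γ v₁ m + d / m) + c * ((1 + b) * Γ v₁ u₂)
        + d * (Γ u₁ m + a * Γ u₁ v₂) := by
    simp only [plcKernel, max_eq_right h₁]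
    ring
  have hD₁_nonpos {x y : ℝ} (hx : 0 < x) (hy : 0 < y) : x ^ 2 * D₁ x y ≤ 0 :=
    mul_nonpos_of_nonneg_of_nonpos (sq_nonneg x) <|
      (hD₁ x y hx hy).hasDerivWithinAt.nonpos_of_antitoneOn (isOpen_Ioi.accPt_principal hx)
        C.antitoneOn_plcReal_left
  have hD₂_nonpos {x y : ℝ} (hx : 0 < x) (hy : 0 < y) : y ^ 2 * D₂ x y ≤ 0 :=
    mul_nonpos_of_nonneg_of_nonpos (sq_nonneg y) <|
      (hD₂ x y hx hy).hasDerivWithinAt.nonpos_of_antitoneOn (isOpen_Ioi.accPt_principal hy)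
        C.antitoneOn_plcReal_right
  have ha : -a ≤ u₁ * Γ u₁ u₂ :=
    (hD₁ u₁ u₂ hu₁ hu₂).neg_sq_mul_le_of_monotoneOn_mul hu₁ (hmon₁ u₂ hu₂)
  have hb : -b ≤ u₂ * Γ u₁ u₂ :=
    (hD₂ u₁ u₂ hu₁ hu₂).neg_sq_mul_le_of_monotoneOn_mul hu₂ (hmon₂ u₁ hu₁)
  have hc : -c ≤ v₁ * Γ v₁ v₂ :=
    (hD₁ v₁ v₂ hv₁ hv₂).neg_sq_mul_le_of_monotoneOn_mul hv₁ (hmon₁ v₂ hv₂)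
  have hd : -d ≤ m * Γ v₁ m :=
    ((hD₂ v₁ v₂ hv₁ hv₂).neg_sq_mul_le_of_monotoneOn_mul hv₂ (hmon₂ v₁ hv₁)).trans
      (hmon₂ v₁ hv₁ hv₂ hm (le_max_right u₂ v₂))
  have ha_term : a * (Γ v₁ v₂ + c / v₁) ≤ 0 :=
    mul_nonpos_of_nonpos_of_nonneg (hD₁_nonpos hu₁ hu₂) (add_div_nonneg_of_neg_le_mul hv₁ hc)
  have hb_term : b * (Γ v₁ m + d / m) ≤ 0 :=
    mul_nonpos_of_nonpos_of_nonneg (hD₂_nonpos hu₁ hu₂) (add_div_nonneg_of_neg_le_mul hm hd)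
  have hc_term : c * ((1 + b) * Γ v₁ u₂) ≤ 0 := by
    refine mul_nonpos_of_nonpos_of_nonneg (hD₁_nonpos hv₁ hv₂)
      (mul_nonneg ?_ (C.plcReal_nonneg hv₁))
    linarith [C.mul_plcReal_le_one_right hu₁ hu₂]
  have hd_term : d * (Γ u₁ m + a * Γ u₁ v₂) ≤ 0 := by
    refine mul_nonpos_of_nonpos_of_nonneg (hD₂_nonpos hv₁ hv₂) ?_
    nlinarith [C.mul_plcReal_mul_plcReal_le hu₁ hu₂ hv₂,
      mul_le_mul_of_nonneg_right ha (C.plcReal_nonneg hu₁ (y := v₂))]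
  linarith

end ParetoLevyCopula

theorem paretoLevyCopula_covariance_comparison_general (C : ParetoLevyCopula) (D₁ D₂ : ℝ → ℝ → ℝ)
    (hD₁ : ∀ x y : ℝ, 0 < x → 0 < y →
      HasDerivAt (fun t : ℝ => plcReal C t y) (D₁ x y) x)
    (hD₂ : ∀ x y : ℝ, 0 < x → 0 < y →
      HasDerivAt (fun t : ℝ => plcReal C x t) (D₂ x y) y)
    (hmon₁ : ∀ y : ℝ, 0 < y → MonotoneOn (fun x : ℝ => x * plcReal C x y) (Set.Ioi 0))
    (hmon₂ : ∀ x : ℝ, 0 < x → MonotoneOn (fun y : ℝ => y * plcReal C x y) (Set.Ioi 0)) :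
    (∀ u v : ℝ × ℝ, 0 < u.1 → 0 < u.2 → 0 < v.1 → 0 < v.2 →
      plcKernel (plcReal C) D₁ D₂ u v ≤ plcReal C (max u.1 v.1) (max u.2 v.2)) ∧
    (∀ u : ℝ × ℝ, 0 < u.1 → 0 < u.2 →
      plcKernel (plcReal C) D₁ D₂ u u ≤ plcReal C u.1 u.2) := by
  have hle : ∀ u v : ℝ × ℝ, 0 < u.1 → 0 < u.2 → 0 < v.1 → 0 < v.2 → u.1 ≤ v.1 →
      plcKernel (plcReal C) D₁ D₂ u v ≤ plcReal C (max u.1 v.1) (max u.2 v.2) := by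
    rintro ⟨u₁, u₂⟩ ⟨v₁, v₂⟩ hu₁ hu₂ hv₁ hv₂ h
    rw [max_eq_right h]
    exact C.plcKernel_le_of_fst_le hD₁ hD₂ hmon₁ hmon₂ hu₁ hu₂ hv₁ hv₂ h
  refine ⟨fun u v hu₁ hu₂ hv₁ hv₂ => ?_, fun u hu₁ hu₂ => ?_⟩
  · rcases le_total u.1 v.1 with h | h
    · exact hle u v hu₁ hu₂ hv₁ hv₂ h
    · rw [plcKernel_comm, max_comm u.1, max_comm u.2]
      exact hle v u hv₁ hv₂ hu₁ hu₂ h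
  · simpa using hle u u hu₁ hu₂ hu₁ hu₂ le_rfl

/-- Asymptotic covariance comparison of the empirical and the oracle Pareto–Lévy copula
estimators: if the Pareto–Lévy copula `Γ` has continuous first-order partial derivatives
on `(0,∞)²` and `u₁ ↦ u₁Γ(u₁,u₂)` and `u₂ ↦ u₂Γ(u₁,u₂)` are nondecreasing, then the
covariance `K(u,v)` of the limiting field of the empirical estimator is dominated by the
covariance `Γ(u₁∨v₁,u₂∨v₂)` of the limiting field of the oracle estimator; in particular
`K(u,u) ≤ Γ(u)`. -/
theorem paretoLevyCopula_covariance_comparison (C : ParetoLevyCopula) (D₁ D₂ : ℝ → ℝ → ℝ)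
    (hD₁ : ∀ x y : ℝ, 0 < x → 0 < y →
      HasDerivAt (fun t : ℝ => plcReal C t y) (D₁ x y) x)
    (hD₂ : ∀ x y : ℝ, 0 < x → 0 < y →
      HasDerivAt (fun t : ℝ => plcReal C x t) (D₂ x y) y)
    (hD₁c : ContinuousOn (fun p : ℝ × ℝ => D₁ p.1 p.2) (Set.Ioi 0 ×ˢ Set.Ioi 0))
    (hD₂c : ContinuousOn (fun p : ℝ × ℝ => D₂ p.1 p.2) (Set.Ioi 0 ×ˢ Set.Ioi 0))
    (hmon₁ : ∀ y : ℝ, 0 < y → MonotoneOn (fun x : ℝ => x * plcReal C x y) (Set.Ioi 0))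
    (hmon₂ : ∀ x : ℝ, 0 < x → MonotoneOn (fun y : ℝ => y * plcReal C x y) (Set.Ioi 0)) :
    (∀ u v : ℝ × ℝ, 0 < u.1 → 0 < u.2 → 0 < v.1 → 0 < v.2 →
      plcKernel (plcReal C) D₁ D₂ u v ≤ plcReal C (max u.1 v.1) (max u.2 v.2)) ∧
    (∀ u : ℝ × ℝ, 0 < u.1 → 0 < u.2 →
      plcKernel (plcReal C) D₁ D₂ u u ≤ plcReal C u.1 u.2) :=
  paretoLevyCopula_covariance_comparison_general C D₁ D₂ hD₁ hD₂ hmon₁ hmon₂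
end

section
/- Let Γ = Γ_{1/2} be the Clayton Pareto–Lévy copula with parameter θ = 1/2, i.e. Γ(u₁,u₂) = (√u₁ + √u₂)^{−2} on (0,∞)², and let K be the asymptotic covariance kernel built from Γ. Then for every x > 0, Γ(x,x) = 1/(4x) and K((x,x),(x,x)) = 21/(128x); consequently the asymptotic relative efficiency on the diagonal equals K((x,x),(x,x))/Γ(x,x) = 21/32. -/
/-- The Clayton Pareto–Lévy copula with parameter `θ = 1/2`:
`Γ(u₁,u₂) = (√u₁ + √u₂)^(−2)` on `(0,∞)²`. -/
noncomputable def claytonHalf (x y : ℝ) : ℝ := ((Real.sqrt x + Real.sqrt y) ^ 2)⁻¹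

/-- First partial derivative of `claytonHalf`. -/
noncomputable def claytonHalfD₁ (x y : ℝ) : ℝ := deriv (fun t : ℝ => claytonHalf t y) x

/-- Second partial derivative of `claytonHalf`. -/
noncomputable def claytonHalfD₂ (x y : ℝ) : ℝ := deriv (fun t : ℝ => claytonHalf x t) y

/-!
On the diagonal every maximum in the kernel collapses, so `K((x,x),(x,x))` is a polynomial in
`Γ(x,x) = 1/(4x)` and `x²∂ᵢΓ(x,x)`. Differentiating `(√t + √y)^(-2)` gives
`∂₁Γ(x,y) = -(√x (√x + √y)³)⁻¹`, hence `x²∂ᵢΓ(x,x) = -1/8` and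
`K = (1/(4x))(1 - 1/2 + 1/32) + 1/(32x) = 21/(128x)`.
-/

open Real

lemma plcKernel_diag (g D₁ D₂ : ℝ → ℝ → ℝ) (x : ℝ) :
    plcKernel g D₁ D₂ (x, x) (x, x) =
      g x x * (1 + 2 * x ^ 2 * (D₁ x x + D₂ x x) + 2 * x ^ 4 * D₁ x x * D₂ x x)
        + x ^ 4 * (D₁ x x ^ 2 + D₂ x x ^ 2) / x := by
  simp only [plcKernel, max_self]
  ring

lemma claytonHalf_comm (x y : ℝ) : claytonHalf x y = claytonHalf y x := by
  rw [claytonHalf, claytonHalf, add_comm]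

lemma claytonHalf_self {x : ℝ} (hx : 0 ≤ x) : claytonHalf x x = 1 / (4 * x) := by
  rw [claytonHalf, ← two_mul, mul_pow, sq_sqrt hx, one_div]
  norm_num

lemma hasDerivAt_claytonHalf_left {x : ℝ} (y : ℝ) (hx : 0 < x) :
    HasDerivAt (fun t => claytonHalf t y) (-(√x * (√x + √y) ^ 3)⁻¹) x := by
  have hsx : 0 < √x := sqrt_pos.mpr hx
  have hsum : 0 < √x + √y := add_pos_of_pos_of_nonneg hsx (sqrt_nonneg y)
  have h := (((hasDerivAt_sqrt hx.ne').add_const √y).pow 2).inv (pow_ne_zero 2 hsum.ne')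
  refine h.congr_deriv ?_
  simp only [Pi.pow_apply]
  field_simp
  ring

lemma claytonHalfD₁_eq {x : ℝ} (y : ℝ) (hx : 0 < x) :
    claytonHalfD₁ x y = -(√x * (√x + √y) ^ 3)⁻¹ :=
  (hasDerivAt_claytonHalf_left y hx).deriv

lemma claytonHalfD₂_eq_claytonHalfD₁ (x y : ℝ) : claytonHalfD₂ x y = claytonHalfD₁ y x := by
  simp only [claytonHalfD₂, claytonHalfD₁, claytonHalf_comm x]

lemma claytonHalfD₁_self {x : ℝ} (hx : 0 < x) : claytonHalfD₁ x x = -1 / (8 * x ^ 2) := by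
  have h : √x * (√x + √x) ^ 3 = 8 * x ^ 2 := by
    rw [← sq_sqrt hx.le, sqrt_sq (sqrt_nonneg x)]
    ring
  rw [claytonHalfD₁_eq x hx, h, neg_div, one_div]

/-- For the Clayton Pareto–Lévy copula with `θ = 1/2`, the diagonal values of the copula
and of the asymptotic covariance kernel are `Γ(x,x) = 1/(4x)` and
`K((x,x),(x,x)) = 21/(128x)`; hence the asymptotic relative efficiency on the diagonal is
`21/32`. -/
theorem claytonHalf_diagonal_variance (x : ℝ) (hx : 0 < x) :
    claytonHalf x x = 1 / (4 * x) ∧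
    plcKernel claytonHalf claytonHalfD₁ claytonHalfD₂ (x, x) (x, x) = 21 / (128 * x) ∧
    plcKernel claytonHalf claytonHalfD₁ claytonHalfD₂ (x, x) (x, x) / claytonHalf x x
      = 21 / 32 := by
  have hΓ := claytonHalf_self hx.le
  have hK : plcKernel claytonHalf claytonHalfD₁ claytonHalfD₂ (x, x) (x, x) = 21 / (128 * x) := by
    rw [plcKernel_diag, claytonHalfD₂_eq_claytonHalfD₁, claytonHalfD₁_self hx, hΓ]
    field_simp
    ring
  refine ⟨hΓ, hK, ?_⟩
  rw [hK, hΓ]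
  field_simp
  norm_num
end

section
/- Let ν be a Borel measure on ℝ² concentrated on (0,∞)² with ∫ min(‖u‖²,1) dν(u) < ∞. Define the tail integral U(x₁,x₂) = ν([x₁,∞)×[x₂,∞)) for (x₁,x₂) ∈ (0,∞)² and the marginal tail integrals U₁(x) = ν([x,∞)×(0,∞)) and U₂(x) = ν((0,∞)×[x,∞)) for x ∈ (0,∞). Assume U₁ and U₂ are continuous, strictly decreasing bijections from (0,∞) onto (0,∞). Define Γ(u₁,u₂) = U(U₁^{−1}(1/u₁), U₂^{−1}(1/u₂)) for (u₁,u₂) ∈ (0,∞)². Then: (a) Γ is 2-increasing on (0,∞)²; (b) U(x₁,x₂) = Γ(1/U₁(x₁), 1/U₂(x₂)) for all (x₁,x₂) ∈ (0,∞)²; (c) for every u₁ ∈ (0,∞), lim_{u₂→0+} Γ(u₁,u₂) = 1/u₁ and lim_{u₂→∞} Γ(u₁,u₂) = 0, and symmetrically in the other coordinate. -/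
open MeasureTheory

/-- The bivariate tail integral `U(x₁,x₂) = ν([x₁,∞)×[x₂,∞))` of a measure on `ℝ²`. -/
noncomputable def tailIntegral (ν : Measure (ℝ × ℝ)) (x₁ x₂ : ℝ) : ℝ :=
  (ν (Set.Ici x₁ ×ˢ Set.Ici x₂)).toReal

/-- The first marginal tail integral `U₁(x) = ν([x,∞)×(0,∞))`. -/
noncomputable def tailIntegral₁ (ν : Measure (ℝ × ℝ)) (x : ℝ) : ℝ :=
  (ν (Set.Ici x ×ˢ Set.Ioi 0)).toReal

/-- The second marginal tail integral `U₂(x) = ν((0,∞)×[x,∞))`. -/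
noncomputable def tailIntegral₂ (ν : Measure (ℝ × ℝ)) (x : ℝ) : ℝ :=
  (ν (Set.Ioi 0 ×ˢ Set.Ici x)).toReal

/-!
`Γ` is the tail integral `U` read through the reparametrisations `u ↦ Uᵢ⁻¹(1/u)`, which are
increasing because `Uᵢ` is decreasing. Hence (a) holds because the rectangle increments of `U`
are `ν`-measures of rectangles `[a₁,b₁) × [a₂,b₂)`, and (b) is just `Uᵢ⁻¹ ∘ Uᵢ = id`.
For (c), `U₂⁻¹(1/u)` tends to `0⁺` as `u → 0⁺` and to `∞` as `u → ∞`, so continuity of `ν` from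
below and from above along the sets `[a,∞) × [c,∞)` gives the limits `U₁(a) = 1/u₁` and `0`; the
required finiteness of `ν([a,∞) × (0,∞))` is `U₁(a) > 0`, since `toReal ∞ = 0`.
The other coordinate follows by transporting `ν` along `Prod.swap`.
-/

open Set Filter Topology
open scoped ENNReal

section ProdMeasure

variable {α β : Type*} [MeasurableSpace α] [MeasurableSpace β] (μ : Measure (α × β))

theorem measureReal_prod_sdiff {s : Set α} {t t' : Set β} (hs : MeasurableSet s)
    (ht' : MeasurableSet t') (h : t' ⊆ t) (hfin : μ (s ×ˢ t) ≠ ∞) :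
    μ.real (s ×ˢ (t \ t')) = μ.real (s ×ˢ t) - μ.real (s ×ˢ t') := by
  rw [← measureReal_sdiff (prod_mono subset_rfl h) (hs.prod ht') hfin, prod_sdiff_prod,
    sdiff_self, empty_prod, union_empty]

theorem measureReal_sdiff_prod {s s' : Set α} {t : Set β} (hs' : MeasurableSet s')
    (ht : MeasurableSet t) (h : s' ⊆ s) (hfin : μ (s ×ˢ t) ≠ ∞) :
    μ.real ((s \ s') ×ˢ t) = μ.real (s ×ˢ t) - μ.real (s' ×ˢ t) := by
  rw [← measureReal_sdiff (prod_mono h subset_rfl) (hs'.prod ht) hfin, prod_sdiff_prod,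
    sdiff_self, prod_empty, empty_union]

end ProdMeasure

section TailMeasure

variable {α : Type*} [MeasurableSpace α] (μ : Measure (α × ℝ)) {s : Set α}

theorem tendsto_measureReal_prod_Ici_atTop (hs : MeasurableSet s) {a : ℝ}
    (hfin : μ (s ×ˢ Ioi a) ≠ ∞) :
    Tendsto (fun c => μ.real (s ×ˢ Ici c)) atTop (𝓝 0) := by
  have h := tendsto_measure_iInter_atTop (μ := μ) (s := fun c => s ×ˢ Ici c)
    (fun c => (hs.prod measurableSet_Ici).nullMeasurableSet)
    (fun c d hcd => prod_mono subset_rfl (Ici_subset_Ici.2 hcd))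
    ⟨a + 1, measure_ne_top_of_subset (prod_mono subset_rfl (Ici_subset_Ioi.2 (by linarith))) hfin⟩
  have hempty : (⋂ c : ℝ, s ×ˢ Ici c) = ∅ :=
    eq_empty_of_forall_notMem fun p hp => by
      have := (mem_iInter.1 hp (p.2 + 1)).2
      simp only [mem_Ici] at this
      linarith
  rw [hempty, measure_empty] at h
  exact (ENNReal.tendsto_toReal ENNReal.zero_ne_top).comp h

theorem tendsto_measureReal_prod_Ici_nhdsGT (hs : MeasurableSet s) {a : ℝ}
    (hfin : μ (s ×ˢ Ioi a) ≠ ∞) :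
    Tendsto (fun c => μ.real (s ×ˢ Ici c)) (𝓝[>] a) (𝓝 (μ.real (s ×ˢ Ioi a))) := by
  have hstrip : Tendsto (fun c => μ.real (s ×ˢ Ioo a c)) (𝓝[>] a) (𝓝 0) := by
    have h := tendsto_measure_biInter_gt (μ := μ) (s := fun c => s ×ˢ Ioo a c)
      (fun c _ => (hs.prod measurableSet_Ioo).nullMeasurableSet)
      (fun c d _ hcd => prod_mono subset_rfl (Ioo_subset_Ioo_right hcd))
      ⟨a + 1, by linarith, measure_ne_top_of_subset (prod_mono subset_rfl Ioo_subset_Ioi_self) hfin⟩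
    have hempty : (⋂ c > a, s ×ˢ Ioo a c) = ∅ := by
      refine eq_empty_of_forall_notMem fun p hp => ?_
      simp only [mem_iInter, mem_prod, mem_Ioo] at hp
      have hp₂ : a < p.2 := (hp (a + 1) (by linarith)).2.1
      exact lt_irrefl _ (hp p.2 hp₂).2.2
    rw [hempty, measure_empty] at h
    exact (ENNReal.tendsto_toReal ENNReal.zero_ne_top).comp h
  have h := (tendsto_const_nhds (x := μ.real (s ×ˢ Ioi a))).sub hstrip
  rw [sub_zero] at h
  refine h.congr' ?_
  filter_upwards [self_mem_nhdsWithin] with c (hc : a < c)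
  rw [← Ioi_sdiff_Ici, measureReal_prod_sdiff μ hs measurableSet_Ici
    (Ici_subset_Ioi.2 hc) hfin, sub_sub_cancel]

end TailMeasure

section RightInverse

variable {U V : ℝ → ℝ}

theorem AntitoneOn.antitoneOn_of_rightInvOn (hU : AntitoneOn U (Ioi 0))
    (hV : MapsTo V (Ioi 0) (Ioi 0)) (hUV : RightInvOn V U (Ioi 0)) : AntitoneOn V (Ioi 0) := by
  intro y hy z hz hyz
  by_contra! h
  have hzy : z ≤ y := by simpa only [hUV hy, hUV hz] using hU (hV hy) (hV hz) h.le
  exact h.ne (congrArg V (le_antisymm hyz hzy))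

theorem AntitoneOn.tendsto_atTop_of_rightInvOn (hU : AntitoneOn U (Ioi 0))
    (hV : MapsTo V (Ioi 0) (Ioi 0)) (hUV : RightInvOn V U (Ioi 0)) :
    Tendsto V atTop (𝓝[>] 0) := by
  have hpos : ∀ᶠ y in atTop, y ∈ Ioi (0 : ℝ) := eventually_gt_atTop 0
  refine tendsto_nhdsWithin_iff.2 ⟨tendsto_order.2 ⟨fun b hb => ?_, fun b hb => ?_⟩,
    hpos.mono fun y hy => hV hy⟩
  · exact hpos.mono fun y hy => hb.trans (hV hy)
  · filter_upwards [hpos, eventually_gt_atTop (U b)] with y hy hyb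
    by_contra! h
    have := hU hb (hV hy) h
    rw [hUV hy] at this
    linarith

theorem StrictAntiOn.tendsto_nhdsGT_zero_of_rightInvOn (hU : StrictAntiOn U (Ioi 0))
    (hU₀ : ∀ x ∈ Ioi 0, 0 ≤ U x) (hV : MapsTo V (Ioi 0) (Ioi 0))
    (hUV : RightInvOn V U (Ioi 0)) : Tendsto V (𝓝[>] 0) atTop := by
  refine tendsto_atTop.2 fun b => ?_
  obtain ⟨c, hbc, hc⟩ : ∃ c, b ≤ c ∧ (0 : ℝ) < c := ⟨max b 1, le_max_left _ _, by positivity⟩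
  have hc' : c + 1 ∈ Ioi (0 : ℝ) := mem_Ioi.2 (by linarith)
  have hUc : 0 < U c := (hU₀ _ hc').trans_lt (hU hc hc' (lt_add_one c))
  filter_upwards [Ioo_mem_nhdsGT hUc] with y hy
  by_contra! h
  have := hU (hV hy.1) hc (h.trans_le hbc)
  rw [hUV hy.1] at this
  exact this.not_gt hy.2

end RightInverse

theorem tailIntegral_rectangle (ν : Measure (ℝ × ℝ)) {a₁ b₁ a₂ b₂ : ℝ} (h₁ : a₁ ≤ b₁)
    (h₂ : a₂ ≤ b₂) (hfin : ν (Ici a₁ ×ˢ Ici a₂) ≠ ∞) :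
    tailIntegral ν b₁ b₂ - tailIntegral ν b₁ a₂ - tailIntegral ν a₁ b₂ + tailIntegral ν a₁ a₂ =
      ν.real (Ico a₁ b₁ ×ˢ Ico a₂ b₂) := by
  have hcol : ∀ y, a₂ ≤ y →
      tailIntegral ν a₁ y - tailIntegral ν b₁ y = ν.real (Ico a₁ b₁ ×ˢ Ici y) := fun y hy => by
    rw [← Ici_sdiff_Ici, measureReal_sdiff_prod ν measurableSet_Ici measurableSet_Ici
      (Ici_subset_Ici.2 h₁)
      (measure_ne_top_of_subset (prod_mono subset_rfl (Ici_subset_Ici.2 hy)) hfin)]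
    rfl
  rw [← Ici_sdiff_Ici (a := a₂), measureReal_prod_sdiff ν measurableSet_Ico measurableSet_Ici
    (Ici_subset_Ici.2 h₂)
    (measure_ne_top_of_subset (prod_mono Ico_subset_Ici_self subset_rfl) hfin),
    ← hcol a₂ le_rfl, ← hcol b₂ h₂]
  ring

theorem tailIntegral_map_swap (ν : Measure (ℝ × ℝ)) (x₁ x₂ : ℝ) :
    tailIntegral (ν.map Prod.swap) x₁ x₂ = tailIntegral ν x₂ x₁ := by
  rw [tailIntegral, Measure.map_apply measurable_swap (measurableSet_Ici.prod measurableSet_Ici),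
    preimage_swap_prod, tailIntegral]

theorem tailIntegral₁_map_swap (ν : Measure (ℝ × ℝ)) :
    tailIntegral₁ (ν.map Prod.swap) = tailIntegral₂ ν := funext fun x => by
  rw [tailIntegral₁, Measure.map_apply measurable_swap (measurableSet_Ici.prod measurableSet_Ioi),
    preimage_swap_prod, tailIntegral₂]

theorem tailIntegral₂_map_swap (ν : Measure (ℝ × ℝ)) :
    tailIntegral₂ (ν.map Prod.swap) = tailIntegral₁ ν := funext fun x => by
  rw [tailIntegral₂, Measure.map_apply measurable_swap (measurableSet_Ioi.prod measurableSet_Ici),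
    preimage_swap_prod, tailIntegral₁]

theorem measure_Ici_prod_Ioi_ne_top_of_tailIntegral₁_pos {ν : Measure (ℝ × ℝ)} {x : ℝ}
    (h : 0 < tailIntegral₁ ν x) : ν (Ici x ×ˢ Ioi 0) ≠ ∞ :=
  (ENNReal.toReal_pos_iff.1 h).2.ne

theorem tailIntegral_comp_inv_rectangle_nonneg (ν : Measure (ℝ × ℝ)) {V₁ V₂ : ℝ → ℝ}
    (hV₁ : AntitoneOn V₁ (Ioi 0)) (hV₂ : AntitoneOn V₂ (Ioi 0))
    (hV₂pos : MapsTo V₂ (Ioi 0) (Ioi 0))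
    (hfin : ∀ y ∈ Ioi (0 : ℝ), ν (Ici (V₁ y) ×ˢ Ioi 0) ≠ ∞) {u₁ u₂ v₁ v₂ : ℝ}
    (hu₁ : 0 < u₁) (hu₂ : 0 < u₂) (h₁ : u₁ ≤ v₁) (h₂ : u₂ ≤ v₂) :
    0 ≤ tailIntegral ν (V₁ (1 / v₁)) (V₂ (1 / v₂))
      - tailIntegral ν (V₁ (1 / v₁)) (V₂ (1 / u₂))
      - tailIntegral ν (V₁ (1 / u₁)) (V₂ (1 / v₂))
      + tailIntegral ν (V₁ (1 / u₁)) (V₂ (1 / u₂)) := by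
  have hu₁' : 1 / u₁ ∈ Ioi (0 : ℝ) := one_div_pos.2 hu₁
  have hu₂' : 1 / u₂ ∈ Ioi (0 : ℝ) := one_div_pos.2 hu₂
  have hv₁' : 1 / v₁ ∈ Ioi (0 : ℝ) := one_div_pos.2 (hu₁.trans_le h₁)
  have hv₂' : 1 / v₂ ∈ Ioi (0 : ℝ) := one_div_pos.2 (hu₂.trans_le h₂)
  rw [tailIntegral_rectangle ν (hV₁ hv₁' hu₁' (one_div_le_one_div_of_le hu₁ h₁))
    (hV₂ hv₂' hu₂' (one_div_le_one_div_of_le hu₂ h₂))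
    (measure_ne_top_of_subset (prod_mono subset_rfl (Ici_subset_Ioi.2 (hV₂pos hu₂')))
      (hfin _ hu₁'))]
  exact measureReal_nonneg

theorem tendsto_tailIntegral_comp_inv (ν : Measure (ℝ × ℝ)) {V : ℝ → ℝ}
    (hU : StrictAntiOn (tailIntegral₂ ν) (Ioi 0)) (hV : MapsTo V (Ioi 0) (Ioi 0))
    (hUV : RightInvOn V (tailIntegral₂ ν) (Ioi 0)) {a : ℝ} (ha : 0 < tailIntegral₁ ν a) :
    Tendsto (fun u => tailIntegral ν a (V (1 / u))) (𝓝[>] 0) (𝓝 (tailIntegral₁ ν a)) ∧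
      Tendsto (fun u => tailIntegral ν a (V (1 / u))) atTop (𝓝 0) := by
  have hfin := measure_Ici_prod_Ioi_ne_top_of_tailIntegral₁_pos ha
  simp only [one_div]
  exact ⟨(tendsto_measureReal_prod_Ici_nhdsGT ν measurableSet_Ici hfin).comp
      ((hU.antitoneOn.tendsto_atTop_of_rightInvOn hV hUV).comp tendsto_inv_nhdsGT_zero),
    (tendsto_measureReal_prod_Ici_atTop ν measurableSet_Ici hfin).comp
      ((hU.tendsto_nhdsGT_zero_of_rightInvOn (fun _ _ => ENNReal.toReal_nonneg) hV hUV).comp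
        tendsto_inv_atTop_nhdsGT_zero)⟩

theorem paretoLevyCopula_of_levyMeasure_general (ν : Measure (ℝ × ℝ))
    (hU₁anti : StrictAntiOn (tailIntegral₁ ν) (Set.Ioi 0))
    (hU₂anti : StrictAntiOn (tailIntegral₂ ν) (Set.Ioi 0))
    (V₁ V₂ : ℝ → ℝ)
    (hV₁ : ∀ x ∈ Set.Ioi (0 : ℝ), V₁ (tailIntegral₁ ν x) = x)
    (hV₂ : ∀ x ∈ Set.Ioi (0 : ℝ), V₂ (tailIntegral₂ ν x) = x)
    (hV₁' : ∀ y ∈ Set.Ioi (0 : ℝ), V₁ y ∈ Set.Ioi (0 : ℝ) ∧ tailIntegral₁ ν (V₁ y) = y)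
    (hV₂' : ∀ y ∈ Set.Ioi (0 : ℝ), V₂ y ∈ Set.Ioi (0 : ℝ) ∧ tailIntegral₂ ν (V₂ y) = y)
    (Γ : ℝ → ℝ → ℝ)
    (hΓ : ∀ u₁ u₂ : ℝ, Γ u₁ u₂ = tailIntegral ν (V₁ (1 / u₁)) (V₂ (1 / u₂))) :
    -- (a) `Γ` is 2-increasing on `(0,∞)²`
    (∀ u₁ u₂ v₁ v₂ : ℝ, 0 < u₁ → 0 < u₂ → u₁ ≤ v₁ → u₂ ≤ v₂ →
      0 ≤ Γ v₁ v₂ - Γ v₁ u₂ - Γ u₁ v₂ + Γ u₁ u₂) ∧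
    -- (b) Sklar identity
    (∀ x₁ x₂ : ℝ, 0 < x₁ → 0 < x₂ →
      tailIntegral ν x₁ x₂ = Γ (1 / tailIntegral₁ ν x₁) (1 / tailIntegral₂ ν x₂)) ∧
    -- (c) marginal limits
    (∀ u₁ : ℝ, 0 < u₁ →
      Filter.Tendsto (fun u₂ : ℝ => Γ u₁ u₂) (nhdsWithin 0 (Set.Ioi 0)) (nhds (1 / u₁)) ∧
      Filter.Tendsto (fun u₂ : ℝ => Γ u₁ u₂) Filter.atTop (nhds 0)) ∧
    (∀ u₂ : ℝ, 0 < u₂ →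
      Filter.Tendsto (fun u₁ : ℝ => Γ u₁ u₂) (nhdsWithin 0 (Set.Ioi 0)) (nhds (1 / u₂)) ∧
      Filter.Tendsto (fun u₁ : ℝ => Γ u₁ u₂) Filter.atTop (nhds 0)) := by
  have hV₁maps : MapsTo V₁ (Ioi 0) (Ioi 0) := fun y hy => (hV₁' y hy).1
  have hV₂maps : MapsTo V₂ (Ioi 0) (Ioi 0) := fun y hy => (hV₂' y hy).1
  have hV₁inv : RightInvOn V₁ (tailIntegral₁ ν) (Ioi 0) := fun y hy => (hV₁' y hy).2
  have hV₂inv : RightInvOn V₂ (tailIntegral₂ ν) (Ioi 0) := fun y hy => (hV₂' y hy).2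
  refine ⟨fun u₁ u₂ v₁ v₂ hu₁ hu₂ h₁ h₂ => ?_, fun x₁ x₂ hx₁ hx₂ => ?_, fun u₁ hu₁ => ?_,
    fun u₂ hu₂ => ?_⟩
  · simp only [hΓ]
    exact tailIntegral_comp_inv_rectangle_nonneg ν
      (hU₁anti.antitoneOn.antitoneOn_of_rightInvOn hV₁maps hV₁inv)
      (hU₂anti.antitoneOn.antitoneOn_of_rightInvOn hV₂maps hV₂inv) hV₂maps
      (fun y hy => measure_Ici_prod_Ioi_ne_top_of_tailIntegral₁_pos ((hV₁inv hy).symm ▸ hy))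
      hu₁ hu₂ h₁ h₂
  · rw [hΓ, one_div_one_div, one_div_one_div, hV₁ x₁ hx₁, hV₂ x₂ hx₂]
  · have hu : tailIntegral₁ ν (V₁ (1 / u₁)) = 1 / u₁ := hV₁inv (one_div_pos.2 hu₁)
    simp only [hΓ]
    have h := tendsto_tailIntegral_comp_inv ν hU₂anti hV₂maps hV₂inv
      (hu.symm ▸ one_div_pos.2 hu₁)
    rwa [hu] at h
  · have hu : tailIntegral₂ ν (V₂ (1 / u₂)) = 1 / u₂ := hV₂inv (one_div_pos.2 hu₂)
    simp only [hΓ, ← tailIntegral_map_swap ν]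
    have h := tendsto_tailIntegral_comp_inv (ν.map Prod.swap)
      (by rwa [tailIntegral₂_map_swap]) hV₁maps (by rwa [tailIntegral₂_map_swap])
      (by rwa [tailIntegral₁_map_swap, hu, one_div_pos])
    rwa [tailIntegral₁_map_swap, hu] at h

/-- Sklar-type properties of the Pareto–Lévy copula
`Γ(u₁,u₂) = U(U₁⁻¹(1/u₁), U₂⁻¹(1/u₂))` of a Lévy measure `ν` concentrated on `(0,∞)²`
whose marginal tail integrals are continuous strictly decreasing bijections of `(0,∞)`:
(a) `Γ` is 2-increasing on `(0,∞)²`; (b) `U(x₁,x₂) = Γ(1/U₁(x₁), 1/U₂(x₂))`;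
(c) `Γ(u₁,u₂) → 1/u₁` as `u₂ → 0+`, `Γ(u₁,u₂) → 0` as `u₂ → ∞`, and symmetrically. -/
theorem paretoLevyCopula_of_levyMeasure (ν : Measure (ℝ × ℝ))
    (hconc : ν ((Set.Ioi (0 : ℝ) ×ˢ Set.Ioi (0 : ℝ))ᶜ) = 0)
    (hint : ∫⁻ u : ℝ × ℝ, ENNReal.ofReal (min (‖u‖ ^ 2) 1) ∂ν ≠ ⊤)
    (hU₁cont : ContinuousOn (tailIntegral₁ ν) (Set.Ioi 0))
    (hU₂cont : ContinuousOn (tailIntegral₂ ν) (Set.Ioi 0))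
    (hU₁anti : StrictAntiOn (tailIntegral₁ ν) (Set.Ioi 0))
    (hU₂anti : StrictAntiOn (tailIntegral₂ ν) (Set.Ioi 0))
    (hU₁bij : Set.BijOn (tailIntegral₁ ν) (Set.Ioi 0) (Set.Ioi 0))
    (hU₂bij : Set.BijOn (tailIntegral₂ ν) (Set.Ioi 0) (Set.Ioi 0))
    (V₁ V₂ : ℝ → ℝ)
    (hV₁ : ∀ x ∈ Set.Ioi (0 : ℝ), V₁ (tailIntegral₁ ν x) = x)
    (hV₂ : ∀ x ∈ Set.Ioi (0 : ℝ), V₂ (tailIntegral₂ ν x) = x)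
    (hV₁' : ∀ y ∈ Set.Ioi (0 : ℝ), V₁ y ∈ Set.Ioi (0 : ℝ) ∧ tailIntegral₁ ν (V₁ y) = y)
    (hV₂' : ∀ y ∈ Set.Ioi (0 : ℝ), V₂ y ∈ Set.Ioi (0 : ℝ) ∧ tailIntegral₂ ν (V₂ y) = y)
    (Γ : ℝ → ℝ → ℝ)
    (hΓ : ∀ u₁ u₂ : ℝ, Γ u₁ u₂ = tailIntegral ν (V₁ (1 / u₁)) (V₂ (1 / u₂))) :
    -- (a) `Γ` is 2-increasing on `(0,∞)²`
    (∀ u₁ u₂ v₁ v₂ : ℝ, 0 < u₁ → 0 < u₂ → u₁ ≤ v₁ → u₂ ≤ v₂ →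
      0 ≤ Γ v₁ v₂ - Γ v₁ u₂ - Γ u₁ v₂ + Γ u₁ u₂) ∧
    -- (b) Sklar identity
    (∀ x₁ x₂ : ℝ, 0 < x₁ → 0 < x₂ →
      tailIntegral ν x₁ x₂ = Γ (1 / tailIntegral₁ ν x₁) (1 / tailIntegral₂ ν x₂)) ∧
    -- (c) marginal limits
    (∀ u₁ : ℝ, 0 < u₁ →
      Filter.Tendsto (fun u₂ : ℝ => Γ u₁ u₂) (nhdsWithin 0 (Set.Ioi 0)) (nhds (1 / u₁)) ∧
      Filter.Tendsto (fun u₂ : ℝ => Γ u₁ u₂) Filter.atTop (nhds 0)) ∧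
    (∀ u₂ : ℝ, 0 < u₂ →
      Filter.Tendsto (fun u₁ : ℝ => Γ u₁ u₂) (nhdsWithin 0 (Set.Ioi 0)) (nhds (1 / u₂)) ∧
      Filter.Tendsto (fun u₁ : ℝ => Γ u₁ u₂) Filter.atTop (nhds 0)) :=
  paretoLevyCopula_of_levyMeasure_general ν hU₁anti hU₂anti V₁ V₂ hV₁ hV₂ hV₁' hV₂' Γ hΓ
end
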